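/- (Corollary: Markov chains under degraded sources when one encoder sees both X and Z.) Suppose additionally that the source pmf satisfies the Markov chain X −∘− Z −∘− Y and that the x-encoder has access to both X^n and Z^n, i.e. J_x^l = f_x^l(X^n, Z^n, J_x^{[1:l-1]}, J_y^{[1:l-1]}). Then for every t ∈ {1,…,n} and l ∈ {1,…,K}: (1) (J_x^1, Z_{[1:t-1]}, Y_{[t+1:n]}) −∘− Z_t −∘− Y_t; (2) (J_x^l, Z_{[t+1:n]}) −∘− (J_x^{[1:l-1]}, J_y^{[1:l-1]}, Z_{[1:t]}, Y_{[t+1:n]}) −∘− Y_t; (3) (J_y^l, Y_{[1:t-1]}) −∘− (J_x^{[1:l]}, J_y^{[1:l-1]}, Z_{[1:t-1]}, Y_{[t:n]}) −∘− (X_t, Z_t); and (4) (Z_{[t+1:n]}, X^n) −∘− (J_x^{[1:K]}, J_y^{[1:K]}, Z_{[1:t]}, Y_{[t+1:n]}) −∘− Y_{[1:t]}. -/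

import Mathlib

noncomputable section

namespace IT

variable {Ω : Type*} [Fintype Ω]

open Classical in
/-- Probability of an event under a weight function on a finite sample space. -/
def pr (w : Ω → ℝ) (E : Ω → Prop) : ℝ := ∑ ω, if E ω then w ω else 0

open Classical in
/-- The distribution (pmf) of a random variable. -/
def dist (w : Ω → ℝ) {α : Type*} [Fintype α] (X : Ω → α) (a : α) : ℝ :=
  ∑ ω, if X ω = a then w ω else 0

/-- Shannon entropy (base 2). -/
def H (w : Ω → ℝ) {α : Type*} [Fintype α] (X : Ω → α) : ℝ :=
  -∑ a, dist w X a * Real.logb 2 (dist w X a)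

/-- Conditional entropy H(X|Y). -/
def condH (w : Ω → ℝ) {α β : Type*} [Fintype α] [Fintype β] (X : Ω → α) (Y : Ω → β) : ℝ :=
  H w (fun ω => (X ω, Y ω)) - H w Y

/-- Mutual information I(X;Y). -/
def mutInfo (w : Ω → ℝ) {α β : Type*} [Fintype α] [Fintype β] (X : Ω → α) (Y : Ω → β) : ℝ :=
  H w X + H w Y - H w (fun ω => (X ω, Y ω))

/-- Conditional mutual information I(X;Y|Z). -/
def condMutInfo (w : Ω → ℝ) {α β γ : Type*} [Fintype α] [Fintype β] [Fintype γ]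
    (X : Ω → α) (Y : Ω → β) (Z : Ω → γ) : ℝ :=
  condH w X Z - condH w X (fun ω => (Y ω, Z ω))

/-- Expectation of a real random variable. -/
def expect (w : Ω → ℝ) (f : Ω → ℝ) : ℝ := ∑ ω, w ω * f ω

end IT

/-- `p` is a probability mass function on a finite type. -/
def IsPMF {α : Type*} [Fintype α] (p : α → ℝ) : Prop := (∀ a, 0 ≤ p a) ∧ ∑ a, p a = 1

/-- The i.i.d. (product) weight on `n`-sequences induced by a single-letter pmf. -/
def iidW {α : Type*} (p : α → ℝ) (n : ℕ) : (Fin n → α) → ℝ := fun x => ∏ t, p (x t)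

/-- The first `l` components of a dependent tuple (the rest masked). -/
def trunc {K : ℕ} {γ : Fin K → Type*} (l : ℕ) (f : (k : Fin K) → γ k) :
    (k : Fin K) → Option (γ k) :=
  fun k => if k.val < l then some (f k) else none

/-- Coordinates with (0-based) index `< t`. -/
def below {n : ℕ} {α : Type*} (t : ℕ) (x : Fin n → α) : Fin n → Option α :=
  fun s => if s.val < t then some (x s) else none

/-- Coordinates with (0-based) index `> t`. -/
def above {n : ℕ} {α : Type*} (t : ℕ) (x : Fin n → α) : Fin n → Option α :=
  fun s => if t < s.val then some (x s) else none

/-- Coordinates with (0-based) index `≥ t`. -/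
def fromIdx {n : ℕ} {α : Type*} (t : ℕ) (x : Fin n → α) : Fin n → Option α :=
  fun s => if t ≤ s.val then some (x s) else none

open Classical in
/-- Number of occurrences of `a` in the sequence `x`. -/
def Nocc {n : ℕ} {α : Type*} (a : α) (x : Fin n → α) : ℕ :=
  (Finset.univ.filter fun t => x t = a).card

/-- Strongly typical set. -/
def typical {α : Type*} [Fintype α] (Q : α → ℝ) (δ : ℝ) (n : ℕ) : Set (Fin n → α) :=
  {x | ∀ a, Q a ≠ 0 → |(Nocc a x : ℝ) / n - Q a| ≤ δ / Fintype.card α}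

open IT

/-!
`I(A;B|C) = 0` is equivalent to `p_{ABC} = p_{A|C} p_{B|C} p_C` (the equality case of Gibbs'
inequality), and this factorisation follows from an exchange: a weight-preserving involution
`(ω, ω') ↦ (σ ω ω', σ ω' ω)` of pairs with `C ω = C ω'` such that `σ ω ω'` keeps `A` of `ω`, `B` of
`ω'` and `C`. Because `X -∘- Z -∘- Y`, `p(x,y,z) p(x',y',z) = p(x,y',z) p(x',y,z)`, so exchanging
the `Y`-coordinates of two i.i.d. sequences at times where their `Z`-coordinates agree preserves
the product weight. The messages survive the exchange by the rectangle property of interactive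
protocols: if `ω` and `ω'` produce the same transcript prefix, so does the sequence made of the
`(X, Z)`-part of `ω` and the `Y`-part of `ω'`. The four chains are exchanges at the times
`s = t`, `s ≤ t`, `s < t` and `s ≤ t` respectively (the third after swapping the two sides).
-/

open Finset Real InformationTheory

theorem eq_of_sum_mul_log_div_eq_zero {ι : Type*} [Fintype ι] {q r : ι → ℝ}
    (hq : ∀ i, 0 ≤ q i) (hr : ∀ i, 0 ≤ r i) (hqr : ∀ i, r i = 0 → q i = 0)
    (hsum : ∑ i, q i = ∑ i, r i) (h : ∑ i, q i * log (q i / r i) = 0) : q = r := by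
  have hkl : ∀ i, r i * klFun (q i / r i) = q i * log (q i / r i) + r i - q i := by
    intro i
    rcases eq_or_ne (r i) 0 with h0 | h0
    · simp [h0, hqr i h0]
    · rw [klFun_apply]
      field_simp
  have hzero : ∑ i, r i * klFun (q i / r i) = 0 := by
    simp only [hkl, sum_sub_distrib, sum_add_distrib, h, hsum]
    ring
  funext i
  have hi := (sum_eq_zero_iff_of_nonneg fun j _ =>
    mul_nonneg (hr j) (klFun_nonneg (div_nonneg (hq j) (hr j)))).1 hzero i (mem_univ i)
  rcases mul_eq_zero.1 hi with h0 | h1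
  · rw [h0, hqr i h0]
  · have hq1 := (klFun_eq_zero_iff (div_nonneg (hq i) (hr i))).1 h1
    have hr0 : r i ≠ 0 := fun h0 => by simp [h0] at hq1
    exact (div_eq_one_iff_eq hr0).1 hq1

namespace IT

variable {Ω : Type*} [Fintype Ω] {α β γ : Type*} [Fintype α] [Fintype β] [Fintype γ]
  (w : Ω → ℝ)

theorem sum_dist_mul (X : Ω → α) (g : α → ℝ) :
    ∑ a, dist w X a * g a = ∑ ω, w ω * g (X ω) := by
  classical
  simp only [dist, sum_mul, ite_mul, zero_mul]
  rw [sum_comm]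
  exact sum_congr rfl fun ω _ => by simp

theorem sum_dist (X : Ω → α) : ∑ a, dist w X a = ∑ ω, w ω := by
  simpa using sum_dist_mul w X 1

theorem sum_dist_pair_left (U : Ω → α) (V : Ω → β) (b : β) :
    ∑ a, dist w (fun ω => (U ω, V ω)) (a, b) = dist w V b := by
  classical
  simp only [dist]
  rw [sum_comm]
  exact sum_congr rfl fun ω _ => by simp [Prod.ext_iff, ite_and]

theorem dist_id : dist w (fun ω => ω) = w := by
  classical
  funext a
  simp [dist]

theorem H_eq_neg_sum (X : Ω → α) : H w X = -∑ ω, w ω * logb 2 (dist w X (X ω)) := by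
  rw [H, sum_dist_mul w X fun a => logb 2 (dist w X a)]

theorem H_comp_of_injective (X : Ω → α) {f : α → β} (hf : Function.Injective f) :
    H w (fun ω => f (X ω)) = H w X := by
  have hdist : ∀ a, dist w (fun ω => f (X ω)) (f a) = dist w X a := fun a =>
    sum_congr rfl fun ω _ => by rw [hf.eq_iff]
  simp only [H_eq_neg_sum, hdist]

theorem condMutInfo_comm (X : Ω → α) (Y : Ω → β) (Z : Ω → γ) :
    condMutInfo w X Y Z = condMutInfo w Y X Z := by
  have hswap : H w (fun ω => (X ω, Y ω, Z ω)) = H w (fun ω => (Y ω, X ω, Z ω)) :=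
    (H_comp_of_injective w (fun ω => (Y ω, X ω, Z ω)) (f := fun x => (x.2.1, x.1, x.2.2))
      fun x y h => by simp_all [Prod.ext_iff])
  simp only [condMutInfo, condH, hswap]
  ring

def condIndepDist (X : Ω → α) (Y : Ω → β) (Z : Ω → γ) (x : α × β × γ) : ℝ :=
  dist w (fun ω => (X ω, Z ω)) (x.1, x.2.2) * dist w (fun ω => (Y ω, Z ω)) (x.2.1, x.2.2) /
    dist w Z x.2.2

theorem sum_condIndepDist (X : Ω → α) (Y : Ω → β) (Z : Ω → γ) :
    ∑ x, condIndepDist w X Y Z x = ∑ ω, w ω := by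
  have hc : ∀ c, ∑ a, ∑ b, condIndepDist w X Y Z (a, b, c) = dist w Z c := fun c => by
    simp only [condIndepDist, mul_div_assoc, ← mul_sum, ← sum_mul, ← sum_div,
      sum_dist_pair_left]
    rw [← mul_div_assoc, mul_self_div_self]
  rw [← sum_dist w Z, ← sum_congr rfl fun c _ => hc c]
  simp only [Fintype.sum_prod_type]
  exact (sum_congr rfl fun a _ => sum_comm).trans sum_comm

theorem condMutInfo_eq_sum (X : Ω → α) (Y : Ω → β) (Z : Ω → γ) :
    condMutInfo w X Y Z = ∑ ω, w ω *
      (logb 2 (dist w (fun ω => (X ω, Y ω, Z ω)) (X ω, Y ω, Z ω)) + logb 2 (dist w Z (Z ω))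
        - logb 2 (dist w (fun ω => (X ω, Z ω)) (X ω, Z ω))
        - logb 2 (dist w (fun ω => (Y ω, Z ω)) (Y ω, Z ω))) := by
  simp only [condMutInfo, condH, H_eq_neg_sum, mul_add, mul_sub, sum_add_distrib, sum_sub_distrib]
  ring

variable {w}

theorem dist_nonneg (hw : ∀ ω, 0 ≤ w ω) (X : Ω → α) (a : α) : 0 ≤ dist w X a :=
  sum_nonneg fun ω _ => by split_ifs <;> simp [hw ω]

theorem dist_le_dist_comp (hw : ∀ ω, 0 ≤ w ω) (X : Ω → α) (f : α → β) (a : α) :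
    dist w X a ≤ dist w (fun ω => f (X ω)) (f a) :=
  sum_le_sum fun ω _ => by
    by_cases h : X ω = a
    · simp [h]
    · simp only [if_neg h]
      split_ifs <;> simp [hw ω]

theorem condMutInfo_eq_sum_mul_logb (hw : ∀ ω, 0 ≤ w ω) (X : Ω → α) (Y : Ω → β) (Z : Ω → γ) :
    condMutInfo w X Y Z = ∑ x, dist w (fun ω => (X ω, Y ω, Z ω)) x *
      logb 2 (dist w (fun ω => (X ω, Y ω, Z ω)) x / condIndepDist w X Y Z x) := by
  rw [condMutInfo_eq_sum]
  refine (sum_dist_mul w (fun ω => (X ω, Y ω, Z ω)) fun x =>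
    logb 2 (dist w (fun ω => (X ω, Y ω, Z ω)) x) + logb 2 (dist w Z x.2.2)
      - logb 2 (dist w (fun ω => (X ω, Z ω)) (x.1, x.2.2))
      - logb 2 (dist w (fun ω => (Y ω, Z ω)) (x.2.1, x.2.2))).symm.trans
    (sum_congr rfl fun x _ => ?_)
  set q := dist w (fun ω => (X ω, Y ω, Z ω)) x
  rcases (show 0 ≤ q from dist_nonneg hw _ x).eq_or_lt with hq | hq
  · rw [← hq]; simp
  have hA : 0 < dist w (fun ω => (X ω, Z ω)) (x.1, x.2.2) :=
    hq.trans_le (dist_le_dist_comp hw _ (fun x => (x.1, x.2.2)) x)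
  have hB : 0 < dist w (fun ω => (Y ω, Z ω)) (x.2.1, x.2.2) :=
    hq.trans_le (dist_le_dist_comp hw _ (fun x => (x.2.1, x.2.2)) x)
  have hD : 0 < dist w Z x.2.2 := hq.trans_le (dist_le_dist_comp hw _ (fun x => x.2.2) x)
  rw [condIndepDist, logb_div hq.ne' (by positivity), logb_div (by positivity) hD.ne',
    logb_mul hA.ne' hB.ne']
  ring

theorem condIndepDist_nonneg (hw : ∀ ω, 0 ≤ w ω) (X : Ω → α) (Y : Ω → β) (Z : Ω → γ)
    (x : α × β × γ) : 0 ≤ condIndepDist w X Y Z x :=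
  div_nonneg (mul_nonneg (dist_nonneg hw _ _) (dist_nonneg hw _ _)) (dist_nonneg hw _ _)

theorem condMutInfo_eq_zero_iff (hw : ∀ ω, 0 ≤ w ω) (X : Ω → α) (Y : Ω → β) (Z : Ω → γ) :
    condMutInfo w X Y Z = 0 ↔ dist w (fun ω => (X ω, Y ω, Z ω)) = condIndepDist w X Y Z := by
  rw [condMutInfo_eq_sum_mul_logb hw]
  constructor
  · intro h
    refine eq_of_sum_mul_log_div_eq_zero (dist_nonneg hw _) (condIndepDist_nonneg hw X Y Z)
      (fun x hx => ?_) (by rw [sum_dist, sum_condIndepDist]) ?_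
    · have hA := dist_le_dist_comp hw (fun ω => (X ω, Y ω, Z ω)) (fun x => (x.1, x.2.2)) x
      have hB := dist_le_dist_comp hw (fun ω => (X ω, Y ω, Z ω)) (fun x => (x.2.1, x.2.2)) x
      have hD := dist_le_dist_comp hw (fun ω => (X ω, Y ω, Z ω)) (fun x => x.2.2) x
      refine le_antisymm ?_ (dist_nonneg hw _ x)
      rcases div_eq_zero_iff.1 hx with h0 | h0
      · rcases mul_eq_zero.1 h0 with h0 | h0
        · exact hA.trans h0.le
        · exact hB.trans h0.le
      · exact hD.trans h0.le
    · simp only [logb, mul_div_assoc', ← sum_div, div_eq_zero_iff] at h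
      exact h.resolve_right (log_pos one_lt_two).ne'
  · intro h
    rw [h]
    refine sum_eq_zero fun x _ => ?_
    rcases eq_or_ne (condIndepDist w X Y Z x) 0 with h0 | h0 <;> simp [h0]

theorem dist_eq_condIndepDist_of_mul_eq (hw : ∀ ω, 0 ≤ w ω) (X : Ω → α) (Y : Ω → β)
    (Z : Ω → γ) (h : ∀ a b c, dist w (fun ω => (X ω, Y ω, Z ω)) (a, b, c) * dist w Z c =
      dist w (fun ω => (X ω, Z ω)) (a, c) * dist w (fun ω => (Y ω, Z ω)) (b, c)) :
    dist w (fun ω => (X ω, Y ω, Z ω)) = condIndepDist w X Y Z := by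
  funext ⟨a, b, c⟩
  rcases eq_or_ne (dist w Z c) 0 with hD | hD
  · have hq := dist_le_dist_comp hw (fun ω => (X ω, Y ω, Z ω)) (fun x => x.2.2) (a, b, c)
    rw [condIndepDist, hD, div_zero]
    exact le_antisymm (hq.trans hD.le) (dist_nonneg hw _ _)
  · exact eq_div_of_mul_eq hD (h a b c)

theorem mul_eq_mul_swap_of_condMutInfo_eq_zero {p : α × β × γ → ℝ} (hp : ∀ x, 0 ≤ p x)
    (h : condMutInfo p (fun x => x.1) (fun x => x.2.1) (fun x => x.2.2) = 0)
    (a a' : α) (b b' : β) (c : γ) :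
    p (a, b, c) * p (a', b', c) = p (a, b', c) * p (a', b, c) := by
  have hp' := congrFun ((dist_id p).symm.trans ((condMutInfo_eq_zero_iff hp _ _ _).1 h))
  simp only [hp', condIndepDist]
  ring

theorem dist_mul_dist_eq_of_exchange {A : Ω → α} {B : Ω → β} {C : Ω → γ} (σ : Ω → Ω → Ω)
    (hσ : ∀ ω ω', σ (σ ω ω') (σ ω' ω) = ω)
    (hw : ∀ ω ω', C ω = C ω' → w (σ ω ω') * w (σ ω' ω) = w ω * w ω')
    (hA : ∀ ω ω', C ω = C ω' → A (σ ω ω') = A ω) (hB : ∀ ω ω', C ω = C ω' → B (σ ω ω') = B ω')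
    (hC : ∀ ω ω', C ω = C ω' → C (σ ω ω') = C ω) (a : α) (b : β) (c : γ) :
    dist w (fun ω => (A ω, B ω, C ω)) (a, b, c) * dist w C c =
      dist w (fun ω => (A ω, C ω)) (a, c) * dist w (fun ω => (B ω, C ω)) (b, c) := by
  set Φ : Ω × Ω → Ω × Ω := fun x => (σ x.1 x.2, σ x.2 x.1)
  have hΦ : Function.Involutive Φ := fun x => Prod.ext (hσ _ _) (hσ _ _)
  have hΦC : ∀ x : Ω × Ω, C x.1 = c → C x.2 = c → C (Φ x).1 = c ∧ C (Φ x).2 = c :=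
    fun x h1 h2 => ⟨(hC _ _ (h1.trans h2.symm)).trans h1, (hC _ _ (h2.trans h1.symm)).trans h2⟩
  simp only [dist, Fintype.sum_mul_sum, ← Fintype.sum_prod_type', ite_zero_mul_ite_zero]
  refine (Fintype.sum_bijective Φ hΦ.bijective _ _ fun x => ?_).symm
  by_cases hx : C x.1 = c ∧ C x.2 = c
  · have hCC : C x.1 = C x.2 := hx.1.trans hx.2.symm
    congr 1
    · simp [Φ, Prod.ext_iff, hA _ _ hCC, hB _ _ hCC, hC _ _ hCC, hC _ _ hCC.symm, hx]
    · exact (hw _ _ hCC).symm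
  · have hΦx : ¬ (C (Φ x).1 = c ∧ C (Φ x).2 = c) := fun h => hx (hΦ x ▸ hΦC _ h.1 h.2)
    rw [if_neg fun h => hx ⟨(Prod.mk.inj h.1).2, (Prod.mk.inj h.2).2⟩,
      if_neg fun h => hΦx ⟨(Prod.mk.inj (Prod.mk.inj h.1).2).2, h.2⟩]

theorem condMutInfo_eq_zero_of_exchange (hw0 : ∀ ω, 0 ≤ w ω) {A : Ω → α} {B : Ω → β}
    {C : Ω → γ} (σ : Ω → Ω → Ω) (hσ : ∀ ω ω', σ (σ ω ω') (σ ω' ω) = ω)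
    (hw : ∀ ω ω', C ω = C ω' → w (σ ω ω') * w (σ ω' ω) = w ω * w ω')
    (hA : ∀ ω ω', C ω = C ω' → A (σ ω ω') = A ω) (hB : ∀ ω ω', C ω = C ω' → B (σ ω ω') = B ω')
    (hC : ∀ ω ω', C ω = C ω' → C (σ ω ω') = C ω) : condMutInfo w A B C = 0 :=
  (condMutInfo_eq_zero_iff hw0 A B C).2 <| dist_eq_condIndepDist_of_mul_eq hw0 A B C
    (dist_mul_dist_eq_of_exchange σ hσ hw hA hB hC)

end IT

section Masks

theorem mask_eq_mask_iff {ι : Type*} {γ : ι → Type*} (P : ι → Prop) [DecidablePred P]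
    {u v : (i : ι) → γ i} :
    ((fun i => if P i then some (u i) else none) : (i : ι) → Option (γ i)) =
        (fun i => if P i then some (v i) else none) ↔ ∀ i, P i → u i = v i := by
  constructor
  · intro h i hi
    simpa [hi] using congrFun h i
  · intro h
    funext i
    split_ifs with hi
    · rw [h i hi]
    · rfl

variable {n : ℕ} {α : Type*} {t : ℕ} {u v : Fin n → α}

theorem below_eq_below_iff : below t u = below t v ↔ ∀ s : Fin n, s.val < t → u s = v s :=
  mask_eq_mask_iff _

theorem above_eq_above_iff : above t u = above t v ↔ ∀ s : Fin n, t < s.val → u s = v s :=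
  mask_eq_mask_iff _

theorem fromIdx_eq_fromIdx_iff : fromIdx t u = fromIdx t v ↔ ∀ s : Fin n, t ≤ s.val → u s = v s :=
  mask_eq_mask_iff _

theorem trunc_eq_trunc_iff {K : ℕ} {γ : Fin K → Type*} {f g : (k : Fin K) → γ k} :
    trunc t f = trunc t g ↔ ∀ k : Fin K, k.val < t → f k = g k :=
  mask_eq_mask_iff _

end Masks

section Exchange

variable {XA YA ZA : Type*} {n : ℕ}

def swapY (S : Fin n → Prop) [DecidablePred S] (ω ω' : Fin n → XA × YA × ZA) :
    Fin n → XA × YA × ZA :=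
  fun s => if S s then ((ω s).1, (ω' s).2.1, (ω s).2.2) else ω s

variable (S : Fin n → Prop) [DecidablePred S] (ω ω' : Fin n → XA × YA × ZA)

@[simp]
theorem swapY_fst (s : Fin n) : (swapY S ω ω' s).1 = (ω s).1 := by
  unfold swapY; split_ifs <;> rfl

@[simp]
theorem swapY_snd_snd (s : Fin n) : (swapY S ω ω' s).2.2 = (ω s).2.2 := by
  unfold swapY; split_ifs <;> rfl

@[simp]
theorem swapY_snd_fst (s : Fin n) :
    (swapY S ω ω' s).2.1 = if S s then (ω' s).2.1 else (ω s).2.1 := by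
  unfold swapY; split_ifs <;> rfl

theorem swapY_snd_fst_of_eq {ω ω' : Fin n → XA × YA × ZA}
    (h : ∀ s, ¬ S s → (ω s).2.1 = (ω' s).2.1) (s : Fin n) :
    (swapY S ω ω' s).2.1 = (ω' s).2.1 := by
  rw [swapY_snd_fst]
  split_ifs with hs
  · rfl
  · exact h s hs

theorem swapY_swapY : swapY S (swapY S ω ω') (swapY S ω' ω) = ω := by
  funext s
  unfold swapY
  split_ifs <;> rfl

theorem iidW_swapY_mul {p : XA × YA × ZA → ℝ}
    (hexch : ∀ x x' y y' z, p (x, y, z) * p (x', y', z) = p (x, y', z) * p (x', y, z))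
    {ω ω' : Fin n → XA × YA × ZA} (hz : ∀ s, S s → (ω s).2.2 = (ω' s).2.2) :
    iidW p n (swapY S ω ω') * iidW p n (swapY S ω' ω) = iidW p n ω * iidW p n ω' := by
  simp only [iidW, ← Finset.prod_mul_distrib]
  refine Finset.prod_congr rfl fun s _ => ?_
  unfold swapY
  split_ifs with hs
  · have h := hz s hs
    generalize ω s = a, ω' s = b at h ⊢
    obtain ⟨x, y, z⟩ := a
    obtain ⟨x', y', z⟩ := b
    subst h
    exact (hexch x x' y y' _).symm
  · rfl

theorem condMutInfo_iidW_eq_zero_of_swapY [Fintype XA] [Fintype YA] [Fintype ZA]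
    {α β γ : Type*} [Fintype α] [Fintype β] [Fintype γ] {p : XA × YA × ZA → ℝ}
    (hp : ∀ x, 0 ≤ p x) (hmc : condMutInfo p (fun x => x.1) (fun x => x.2.1) (fun x => x.2.2) = 0)
    {A : (Fin n → XA × YA × ZA) → α} {B : (Fin n → XA × YA × ZA) → β}
    {C : (Fin n → XA × YA × ZA) → γ}
    (h : ∀ ω ω', C ω = C ω' → (∀ s, S s → (ω s).2.2 = (ω' s).2.2) ∧
      A (swapY S ω ω') = A ω ∧ B (swapY S ω ω') = B ω' ∧ C (swapY S ω ω') = C ω) :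
    condMutInfo (iidW p n) A B C = 0 :=
  condMutInfo_eq_zero_of_exchange (fun _ => Finset.prod_nonneg fun _ _ => hp _) (swapY S)
    (swapY_swapY S) (fun ω ω' hC => iidW_swapY_mul S
      (mul_eq_mul_swap_of_condMutInfo_eq_zero hp hmc) (h ω ω' hC).1)
    (fun ω ω' hC => (h ω ω' hC).2.1) (fun ω ω' hC => (h ω ω' hC).2.2.1)
    (fun ω ω' hC => (h ω ω' hC).2.2.2)

end Exchange

section Protocol

variable {XA YA ZA : Type*} {n K : ℕ} {Mx My : Fin K → Type*}

structure IsInteractive (Jx : (l : Fin K) → (Fin n → XA × YA × ZA) → Mx l)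
    (Jy : (l : Fin K) → (Fin n → XA × YA × ZA) → My l) : Prop where
  jx_congr {l : Fin K} {ω ω' : Fin n → XA × YA × ZA} : (∀ s, (ω s).1 = (ω' s).1) →
    (∀ s, (ω s).2.2 = (ω' s).2.2) → (∀ k < l, Jx k ω = Jx k ω' ∧ Jy k ω = Jy k ω') →
    Jx l ω = Jx l ω'
  jy_congr {l : Fin K} {ω ω' : Fin n → XA × YA × ZA} : (∀ s, (ω s).2.1 = (ω' s).2.1) →
    (∀ k ≤ l, Jx k ω = Jx k ω') → (∀ k < l, Jy k ω = Jy k ω') → Jy l ω = Jy l ω'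

variable {Jx : (l : Fin K) → (Fin n → XA × YA × ZA) → Mx l}
  {Jy : (l : Fin K) → (Fin n → XA × YA × ZA) → My l}

theorem isInteractive_of_exists
    (hJx : ∀ l : Fin K, ∃ f : (Fin n → XA) → (Fin n → ZA) →
        ((k : Fin K) → k.val < l.val → Mx k) → ((k : Fin K) → k.val < l.val → My k) → Mx l,
      ∀ ω, Jx l ω = f (fun t => (ω t).1) (fun t => (ω t).2.2)
        (fun k _ => Jx k ω) (fun k _ => Jy k ω))
    (hJy : ∀ l : Fin K, ∃ f : (Fin n → YA) →
        ((k : Fin K) → k.val ≤ l.val → Mx k) → ((k : Fin K) → k.val < l.val → My k) → My l,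
      ∀ ω, Jy l ω = f (fun t => (ω t).2.1) (fun k _ => Jx k ω) (fun k _ => Jy k ω)) :
    IsInteractive Jx Jy where
  jx_congr {l ω ω'} hx hz hJ := by
    obtain ⟨f, hf⟩ := hJx l
    rw [hf ω, hf ω']
    congr 1
    · exact funext hx
    · exact funext hz
    · exact funext fun k => funext fun hk => (hJ k hk).1
    · exact funext fun k => funext fun hk => (hJ k hk).2
  jy_congr {l ω ω'} hy hJx' hJy' := by
    obtain ⟨f, hf⟩ := hJy l
    rw [hf ω, hf ω']
    congr 1
    · exact funext hy
    · exact funext fun k => funext fun hk => hJx' k hk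
    · exact funext fun k => funext fun hk => hJy' k hk

theorem IsInteractive.transcript_rectangle (hJ : IsInteractive Jx Jy) {m : ℕ}
    {ω ω' ω'' : Fin n → XA × YA × ZA} (hx : ∀ s, (ω'' s).1 = (ω s).1)
    (hz : ∀ s, (ω'' s).2.2 = (ω s).2.2) (hy : ∀ s, (ω'' s).2.1 = (ω' s).2.1)
    (hagree : ∀ k : Fin K, k.val < m → Jx k ω = Jx k ω' ∧ Jy k ω = Jy k ω') :
    (∀ k : Fin K, k.val ≤ m → Jx k ω'' = Jx k ω) ∧
      ∀ k : Fin K, k.val < m → Jy k ω'' = Jy k ω := by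
  have hlt : ∀ k : Fin K, k.val < m → Jx k ω'' = Jx k ω ∧ Jy k ω'' = Jy k ω := by
    intro k
    induction k using WellFoundedLT.induction with
    | ind k ih =>
    intro hk
    have hprev : ∀ j < k, Jx j ω'' = Jx j ω ∧ Jy j ω'' = Jy j ω :=
      fun j hj => ih j hj (lt_trans hj hk)
    have hxk : Jx k ω'' = Jx k ω := hJ.jx_congr hx hz hprev
    refine ⟨hxk, (hJ.jy_congr hy (fun j hj => ?_) fun j hj => ?_).trans (hagree k hk).2.symm⟩
    · rcases hj.lt_or_eq with hj | rfl
      · exact (hprev j hj).1.trans (hagree j (lt_trans hj hk)).1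
      · exact hxk.trans (hagree j hk).1
    · exact (hprev j hj).2.trans (hagree j (lt_trans hj hk)).2
  refine ⟨fun k hk => ?_, fun k hk => (hlt k hk).2⟩
  rcases hk.lt_or_eq with hk | hk
  · exact (hlt k hk).1
  · exact hJ.jx_congr hx hz fun j hj => hlt j (hk ▸ hj)

end Protocol

section MarkovChains

variable {XA YA ZA : Type*} [Fintype XA] [Fintype YA] [Fintype ZA] {p : XA × YA × ZA → ℝ}
  {n K : ℕ} {Mx My : Fin K → Type*}
  {Jx : (l : Fin K) → (Fin n → XA × YA × ZA) → Mx l}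
  {Jy : (l : Fin K) → (Fin n → XA × YA × ZA) → My l}

theorem condMutInfo_firstMessage_eq_zero [∀ l, Fintype (Mx l)] (hp : ∀ x, 0 ≤ p x)
    (hmc : condMutInfo p (fun x => x.1) (fun x => x.2.1) (fun x => x.2.2) = 0)
    (hJ : IsInteractive Jx Jy) (hK : 0 < K) (t : Fin n) :
    condMutInfo (iidW p n)
      (fun ω => (Jx ⟨0, hK⟩ ω, below t.val (fun s => (ω s).2.2),
        above t.val (fun s => (ω s).2.1)))
      (fun ω => (ω t).2.1) (fun ω => (ω t).2.2) = 0 := by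
  refine condMutInfo_iidW_eq_zero_of_swapY (· = t) hp hmc fun ω ω' h =>
    ⟨fun s hs => hs ▸ h, ?_, by simp, by simp⟩
  have hJx : Jx ⟨0, hK⟩ (swapY (· = t) ω ω') = Jx ⟨0, hK⟩ ω :=
    hJ.jx_congr (swapY_fst _ ω ω') (swapY_snd_snd _ ω ω')
      fun k hk => absurd hk (Nat.not_lt_zero k.val)
  simp only [Prod.mk.injEq, hJx, swapY_snd_snd, swapY_snd_fst, above_eq_above_iff, true_and]
  exact fun s hs => if_neg (Fin.ne_of_gt hs)

theorem condMutInfo_xMessage_eq_zero [∀ l, Fintype (Mx l)] [∀ l, Fintype (My l)]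
    (hp : ∀ x, 0 ≤ p x)
    (hmc : condMutInfo p (fun x => x.1) (fun x => x.2.1) (fun x => x.2.2) = 0)
    (hJ : IsInteractive Jx Jy) (t : Fin n) (l : Fin K) :
    condMutInfo (iidW p n)
      (fun ω => (Jx l ω, above t.val (fun s => (ω s).2.2)))
      (fun ω => (ω t).2.1)
      (fun ω => (trunc l.val (fun k => Jx k ω), trunc l.val (fun k => Jy k ω),
        below (t.val + 1) (fun s => (ω s).2.2), above t.val (fun s => (ω s).2.1))) = 0 := by
  refine condMutInfo_iidW_eq_zero_of_swapY (fun s => s.val ≤ t.val) hp hmc fun ω ω' h => ?_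
  simp only [Prod.mk.injEq, trunc_eq_trunc_iff, below_eq_below_iff, above_eq_above_iff] at h
  obtain ⟨hJx, hJy, hz, hy⟩ := h
  obtain ⟨hmixX, hmixY⟩ := hJ.transcript_rectangle (swapY_fst _ ω ω') (swapY_snd_snd _ ω ω')
    (swapY_snd_fst_of_eq _ fun s hs => hy s (not_le.1 hs)) fun k hk => ⟨hJx k hk, hJy k hk⟩
  refine ⟨fun s hs => hz s (Nat.lt_succ_of_le hs), ?_, by simp, ?_⟩
  · simp [hmixX l le_rfl]
  · simp only [Prod.mk.injEq, trunc_eq_trunc_iff, above_eq_above_iff, swapY_snd_snd,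
      swapY_snd_fst, true_and]
    exact ⟨fun k hk => hmixX k hk.le, hmixY, fun s hs => if_neg (not_le.2 hs)⟩

theorem condMutInfo_yMessage_eq_zero [∀ l, Fintype (Mx l)] [∀ l, Fintype (My l)]
    (hp : ∀ x, 0 ≤ p x)
    (hmc : condMutInfo p (fun x => x.1) (fun x => x.2.1) (fun x => x.2.2) = 0)
    (hJ : IsInteractive Jx Jy) (t : Fin n) (l : Fin K) :
    condMutInfo (iidW p n)
      (fun ω => (Jy l ω, below t.val (fun s => (ω s).2.1)))
      (fun ω => ((ω t).1, (ω t).2.2))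
      (fun ω => (trunc (l.val + 1) (fun k => Jx k ω), trunc l.val (fun k => Jy k ω),
        below t.val (fun s => (ω s).2.2), fromIdx t.val (fun s => (ω s).2.1))) = 0 := by
  rw [condMutInfo_comm]
  refine condMutInfo_iidW_eq_zero_of_swapY (fun s => s.val < t.val) hp hmc fun ω ω' h => ?_
  simp only [Prod.mk.injEq, trunc_eq_trunc_iff, below_eq_below_iff, fromIdx_eq_fromIdx_iff] at h
  obtain ⟨hJx, hJy, hz, hy⟩ := h
  have hy' := swapY_snd_fst_of_eq (fun s => s.val < t.val) fun s hs => hy s (not_lt.1 hs)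
  obtain ⟨hmixX, hmixY⟩ := hJ.transcript_rectangle (swapY_fst _ ω ω') (swapY_snd_snd _ ω ω') hy'
    fun k hk => ⟨hJx k (Nat.lt_succ_of_lt hk), hJy k hk⟩
  have hJyl : Jy l (swapY (fun s => s.val < t.val) ω ω') = Jy l ω' :=
    hJ.jy_congr hy' (fun k hk => (hmixX k hk).trans (hJx k (Nat.lt_succ_of_le hk)))
      fun k hk => (hmixY k hk).trans (hJy k hk)
  refine ⟨hz, by simp, Prod.ext hJyl (below_eq_below_iff.2 fun s _ => hy' s), ?_⟩
  simp only [Prod.mk.injEq, trunc_eq_trunc_iff, fromIdx_eq_fromIdx_iff, swapY_snd_snd,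
    swapY_snd_fst, true_and]
  exact ⟨fun k hk => hmixX k (Nat.lt_succ_iff.1 hk), hmixY, fun s hs => if_neg (not_lt.2 hs)⟩

theorem condMutInfo_transcript_eq_zero [∀ l, Fintype (Mx l)] [∀ l, Fintype (My l)]
    (hp : ∀ x, 0 ≤ p x)
    (hmc : condMutInfo p (fun x => x.1) (fun x => x.2.1) (fun x => x.2.2) = 0)
    (hJ : IsInteractive Jx Jy) (t : Fin n) :
    condMutInfo (iidW p n)
      (fun ω => (above t.val (fun s => (ω s).2.2), fun s => (ω s).1))
      (fun ω => below (t.val + 1) (fun s => (ω s).2.1))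
      (fun ω => ((fun k => Jx k ω), (fun k => Jy k ω),
        below (t.val + 1) (fun s => (ω s).2.2), above t.val (fun s => (ω s).2.1))) = 0 := by
  refine condMutInfo_iidW_eq_zero_of_swapY (fun s => s.val ≤ t.val) hp hmc fun ω ω' h => ?_
  simp only [Prod.mk.injEq, below_eq_below_iff, above_eq_above_iff] at h
  obtain ⟨hJx, hJy, hz, hy⟩ := h
  have hy' := swapY_snd_fst_of_eq (fun s => s.val ≤ t.val) fun s hs => hy s (not_le.1 hs)
  obtain ⟨hmixX, hmixY⟩ := hJ.transcript_rectangle (m := K) (swapY_fst _ ω ω')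
    (swapY_snd_snd _ ω ω') hy' fun k _ => ⟨congrFun hJx k, congrFun hJy k⟩
  refine ⟨fun s hs => hz s (Nat.lt_succ_of_le hs), by simp,
    below_eq_below_iff.2 fun s _ => hy' s, ?_⟩
  simp only [Prod.mk.injEq, above_eq_above_iff, swapY_snd_snd, swapY_snd_fst, true_and]
  exact ⟨funext fun k => hmixX k k.isLt.le, funext fun k => hmixY k k.isLt,
    fun s hs => if_neg (not_le.2 hs)⟩

end MarkovChains

/-- **Corollary (degraded sources, x-encoder observing both `X` and `Z`).**
If `X -∘- Z -∘- Y` and `J_x^l = f_x^l(Xⁿ, Zⁿ, J_x^{[1:l-1]}, J_y^{[1:l-1]})`, then the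
four stated Markov chains hold. -/
theorem two_node_interactive_markov_degraded
    {XA YA ZA : Type} [Fintype XA] [Fintype YA] [Fintype ZA]
    (p : XA × YA × ZA → ℝ) (hp : IsPMF p)
    -- source Markov chain X -∘- Z -∘- Y, i.e. I(X;Y|Z) = 0
    (hmc : IT.condMutInfo p (fun a => a.1) (fun a => a.2.1) (fun a => a.2.2) = 0)
    {n K : ℕ} (mx my : Fin K → ℕ)
    (Jx : (l : Fin K) → (Fin n → XA × YA × ZA) → Fin (mx l))
    (Jy : (l : Fin K) → (Fin n → XA × YA × ZA) → Fin (my l))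
    -- J_x^l = f_x^l(Xⁿ, Zⁿ, J_x^{[1:l-1]}, J_y^{[1:l-1]})
    (hJx : ∀ l : Fin K, ∃ f : (Fin n → XA) → (Fin n → ZA) →
        ((k : Fin K) → k.val < l.val → Fin (mx k)) →
        ((k : Fin K) → k.val < l.val → Fin (my k)) → Fin (mx l),
      ∀ ω, Jx l ω = f (fun t => (ω t).1) (fun t => (ω t).2.2)
        (fun k _ => Jx k ω) (fun k _ => Jy k ω))
    -- J_y^l = f_y^l(Yⁿ, J_x^{[1:l]}, J_y^{[1:l-1]})
    (hJy : ∀ l : Fin K, ∃ f : (Fin n → YA) →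
        ((k : Fin K) → k.val ≤ l.val → Fin (mx k)) →
        ((k : Fin K) → k.val < l.val → Fin (my k)) → Fin (my l),
      ∀ ω, Jy l ω = f (fun t => (ω t).2.1) (fun k _ => Jx k ω) (fun k _ => Jy k ω))
    (hK : 0 < K) :
    ∀ t : Fin n,
      -- (1) (J_x^1, Z_{[1:t-1]}, Y_{[t+1:n]}) -∘- Z_t -∘- Y_t
      IT.condMutInfo (iidW p n)
        (fun ω => (Jx ⟨0, hK⟩ ω, below t.val (fun s => (ω s).2.2),
          above t.val (fun s => (ω s).2.1)))
        (fun ω => (ω t).2.1)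
        (fun ω => (ω t).2.2) = 0 ∧
      -- (2) (J_x^l, Z_{[t+1:n]}) -∘- (J_x^{[1:l-1]}, J_y^{[1:l-1]}, Z_{[1:t]}, Y_{[t+1:n]}) -∘- Y_t
      (∀ l : Fin K,
        IT.condMutInfo (iidW p n)
          (fun ω => (Jx l ω, above t.val (fun s => (ω s).2.2)))
          (fun ω => (ω t).2.1)
          (fun ω => (trunc l.val (fun k => Jx k ω), trunc l.val (fun k => Jy k ω),
            below (t.val + 1) (fun s => (ω s).2.2), above t.val (fun s => (ω s).2.1))) = 0) ∧
      -- (3) (J_y^l, Y_{[1:t-1]}) -∘- (J_x^{[1:l]}, J_y^{[1:l-1]}, Z_{[1:t-1]}, Y_{[t:n]}) -∘- (X_t, Z_t)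
      (∀ l : Fin K,
        IT.condMutInfo (iidW p n)
          (fun ω => (Jy l ω, below t.val (fun s => (ω s).2.1)))
          (fun ω => ((ω t).1, (ω t).2.2))
          (fun ω => (trunc (l.val + 1) (fun k => Jx k ω), trunc l.val (fun k => Jy k ω),
            below t.val (fun s => (ω s).2.2), fromIdx t.val (fun s => (ω s).2.1))) = 0) ∧
      -- (4) (Z_{[t+1:n]}, Xⁿ) -∘- (J_x^{[1:K]}, J_y^{[1:K]}, Z_{[1:t]}, Y_{[t+1:n]}) -∘- Y_{[1:t]}
      IT.condMutInfo (iidW p n)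
        (fun ω => (above t.val (fun s => (ω s).2.2), fun s => (ω s).1))
        (fun ω => below (t.val + 1) (fun s => (ω s).2.1))
        (fun ω => ((fun k => Jx k ω), (fun k => Jy k ω),
          below (t.val + 1) (fun s => (ω s).2.2), above t.val (fun s => (ω s).2.1))) = 0 := by
  have hJ := isInteractive_of_exists hJx hJy
  intro t
  exact ⟨condMutInfo_firstMessage_eq_zero hp.1 hmc hJ hK t,
    fun l => condMutInfo_xMessage_eq_zero hp.1 hmc hJ t l,
    fun l => condMutInfo_yMessage_eq_zero hp.1 hmc hJ t l,
    condMutInfo_transcript_eq_zero hp.1 hmc hJ t⟩
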